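/- Let q ≥ 2 be an integer and let T₁ and T₂ be triangle presentations of order q on the same finite base set F. Let ω : T₂ → ℂ be a function with |ω(i,j,k)| = 1 for all (i,j,k) ∈ T₂. Define E_{T₁} = Σ_{(i,j,k)∈T₁} e_i ⊗ e_j ⊗ e_k and E_{T₂,ω} = Σ_{(i,j,k)∈T₂} ω(i,j,k) e_i ⊗ e_j ⊗ e_k in (ℂ^F)^{⊗3}. If w is a unitary operator on ℂ^F such that (w ⊗ w ⊗ w)E_{T₁} = E_{T₂,ω}, then w is a monomial matrix (in every row and every column of w there is exactly one nonzero entry), and consequently there exists a bijection θ : F → F with (θ × θ × θ)(T₁) = T₂, i.e. T₁ and T₂ are isomorphic triangle presentations. -/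

import Mathlib

/-- A triangle presentation of order `q` on the finite base set `F`:
(i) cyclic invariance; (ii) for each pair `(i,j)` there is at most one `k` with
`(i,j,k) ∈ T` (one writes `i → j` when such `k` exists; `i` is then a predecessor of `j`
and `j` a successor of `i`); (iii) any two distinct points have exactly one common
predecessor and exactly one common successor; (iv) every point has exactly `q+1`
predecessors and exactly `q+1` successors. -/
def IsTrianglePresentation {F : Type*} [Fintype F] (q : ℕ) (T : Set (F × F × F)) : Prop :=
  (∀ i j k : F, (i, j, k) ∈ T → (k, i, j) ∈ T) ∧
  (∀ i j k k' : F, (i, j, k) ∈ T → (i, j, k') ∈ T → k = k') ∧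
  (∀ a b : F, a ≠ b →
      (∃! p : F, (∃ k, (p, a, k) ∈ T) ∧ ∃ k, (p, b, k) ∈ T) ∧
      (∃! s : F, (∃ k, (a, s, k) ∈ T) ∧ ∃ k, (b, s, k) ∈ T)) ∧
  (∀ x : F, {p : F | ∃ k, (p, x, k) ∈ T}.ncard = q + 1 ∧
      {s : F | ∃ k, (x, s, k) ∈ T}.ncard = q + 1)

open Matrix

/-!
Fix the row `x = w i` of `w` and contract the first leg of `E_{T₁}` with it, obtaining a
matrix `M`; the hypothesis says that `w M wᵀ` is the slice `N = E_{T₂,ω}(i, ·, ·)`. The quantity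
`tr ((M Mᴴ)²)` is unchanged under `M ↦ w M wᵀ`. For `N` it is `q + 1`, because `N Nᴴ` is the
0/1 diagonal matrix of the successors of `i`. For `M` the axioms on common successors and
predecessors, i.e. the incidence identity `S Sᵀ = Sᵀ S = q I + J` of the projective plane
underlying a triangle presentation, give `2 (∑ t)² + (q - 1) ∑ t²` with `t a = |x a|²`.
As `∑ t = 1` and `q ≠ 1`, also `∑ t² = 1`, so exactly one `t a` is nonzero. Hence every row of
the unitary `w` has a single nonzero entry, `w` is monomial, and its permutation carries `T₂`
onto `T₁` because `ω` does not vanish on `T₂`.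
-/

open Complex (normSq)

section

variable {F : Type*}

section TriangleTensor

variable {T : Set (F × F × F)} [DecidablePred (· ∈ T)]

variable (T) in
/-- `E_{T,ω}`, as a function on `F³`. -/
def triangleTensor (ω : F × F × F → ℂ) (x : F × F × F) : ℂ :=
  if x ∈ T then ω x else 0

theorem triangleTensor_ne_zero_iff {ω : F × F × F → ℂ} (hω : ∀ x ∈ T, ω x ≠ 0)
    (x : F × F × F) : triangleTensor T ω x ≠ 0 ↔ x ∈ T := by
  unfold triangleTensor
  split_ifs with h
  · exact iff_of_true (hω x h) h
  · exact iff_of_false (not_not.2 rfl) h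

end TriangleTensor

variable [Fintype F]

namespace IsTrianglePresentation

variable {q : ℕ} {T : Set (F × F × F)}

theorem rotate (hT : IsTrianglePresentation q T) {i j k : F} (h : (i, j, k) ∈ T) :
    (k, i, j) ∈ T :=
  hT.1 i j k h

theorem eq_of_mem_of_mem_right (hT : IsTrianglePresentation q T) {i j k k' : F}
    (h : (i, j, k) ∈ T) (h' : (i, j, k') ∈ T) : k = k' :=
  hT.2.1 i j k k' h h'

theorem eq_of_mem_of_mem_left (hT : IsTrianglePresentation q T) {i i' j k : F}
    (h : (i, j, k) ∈ T) (h' : (i', j, k) ∈ T) : i = i' :=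
  hT.eq_of_mem_of_mem_right (hT.rotate (hT.rotate h)) (hT.rotate (hT.rotate h'))

theorem eq_of_mem_of_mem_mid (hT : IsTrianglePresentation q T) {i j j' k : F}
    (h : (i, j, k) ∈ T) (h' : (i, j', k) ∈ T) : j = j' :=
  hT.eq_of_mem_of_mem_right (hT.rotate h) (hT.rotate h')

end IsTrianglePresentation

theorem sum_boole_eq_ite_exists {α : Type*} [Semiring α] {p : F → Prop} [DecidablePred p]
    (hp : ∀ x y, p x → p y → x = y) :
    ∑ x, (if p x then (1 : α) else 0) = if ∃ x, p x then 1 else 0 := by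
  split_ifs with h
  · obtain ⟨x₀, hx₀⟩ := h
    rw [Finset.sum_eq_single x₀ (fun x _ hx => if_neg fun hpx => hx (hp x x₀ hpx hx₀))
      (by simp), if_pos hx₀]
  · exact Finset.sum_eq_zero fun x _ => if_neg fun hx => h ⟨x, hx⟩

theorem sum_boole_eq_ncard {α : Type*} [AddCommMonoidWithOne α] (p : F → Prop) [DecidablePred p] :
    ∑ x, (if p x then (1 : α) else 0) = {x | p x}.ncard := by
  rw [Finset.sum_boole, ← Set.toFinset_ofPred, ← Set.ncard_eq_toFinset_card']

section Incidence

variable {α : Type*} [CommSemiring α] [DecidableEq F]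

/-- The incidence identity `S Sᵀ = q I + J` of a projective plane of order `q`. -/
theorem boole_mul_transpose_eq {q : ℕ} {R : F → F → Prop} [DecidableRel R]
    (hcard : ∀ a, {b | R a b}.ncard = q + 1) (hmeet : ∀ a a', a ≠ a' → ∃! b, R a b ∧ R a' b) :
    (of fun a b => if R a b then (1 : α) else 0) * (of fun a b => if R a b then 1 else 0)ᵀ =
      (q : α) • 1 + of fun _ _ => 1 := by
  ext a a'
  simp only [mul_apply, of_apply, transpose_apply, ite_zero_mul_ite_zero, mul_one, Matrix.add_apply,
    Matrix.smul_apply, one_apply, smul_eq_mul, sum_boole_eq_ncard]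
  split_ifs with h
  · subst h
    simp only [and_self, hcard]
    push_cast
    ring
  · obtain ⟨s, hs, hu⟩ := hmeet a a' h
    rw [show {b | R a b ∧ R a' b}.ncard = 1 from
      Set.ncard_eq_one.2 ⟨s, Set.ext fun b => ⟨hu b, fun hb => hb ▸ hs⟩⟩]
    simp

theorem sum_vecMul_sq_of_mul_transpose_eq {q : ℕ} {S : Matrix F F α}
    (hS : S * Sᵀ = (q : α) • 1 + of fun _ _ => 1) (t : F → α) :
    ∑ b, (t ᵥ* S) b ^ 2 = (∑ a, t a) ^ 2 + q * ∑ a, t a ^ 2 := by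
  have h : ∑ b, (t ᵥ* S) b ^ 2 = t ⬝ᵥ ((S * Sᵀ) *ᵥ t) := by
    rw [← mulVec_mulVec, mulVec_transpose, dotProduct_mulVec]
    simp only [dotProduct, sq]
  rw [h, hS, add_mulVec, smul_mulVec, one_mulVec, dotProduct_add, dotProduct_smul]
  simp only [dotProduct, mulVec, of_apply, one_mul, smul_eq_mul, sq, ← Finset.sum_mul]
  ring

end Incidence

variable {q : ℕ} {T : Set (F × F × F)} [DecidablePred (· ∈ T)]

variable (T) in
/-- The incidence matrix of the relation `i → j`. -/
def succMatrix : Matrix F F ℝ :=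
  of fun i j => if ∃ k, (i, j, k) ∈ T then 1 else 0

def contractFirst (E : F × F × F → ℂ) (x : F → ℂ) : Matrix F F ℂ :=
  of fun b c => ∑ a, x a * E (a, b, c)

theorem mul_contractFirst_mul_transpose_apply (w : Matrix F F ℂ) (E : F × F × F → ℂ)
    (i j k : F) :
    (w * contractFirst E (w i) * wᵀ) j k =
      ∑ a, ∑ b, ∑ c, w i a * w j b * w k c * E (a, b, c) := by
  simp only [mul_apply, contractFirst, of_apply, transpose_apply, Finset.sum_mul, Finset.mul_sum]
  rw [Finset.sum_comm, Finset.sum_congr rfl fun _ _ => Finset.sum_comm, Finset.sum_comm]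
  exact Finset.sum_congr rfl fun a _ => Finset.sum_congr rfl fun b _ =>
    Finset.sum_congr rfl fun c _ => by ring

namespace Matrix

theorem mul_conjTranspose_apply_self (M : Matrix F F ℂ) (b : F) :
    (M * Mᴴ) b b = ∑ c, (normSq (M b c) : ℂ) := by
  simp only [mul_apply, conjTranspose_apply, Complex.star_def, Complex.mul_conj]

variable [DecidableEq F]

theorem IsHermitian.trace_sq_eq_sum_normSq {G : Matrix F F ℂ} (hG : G.IsHermitian) :
    trace (G ^ 2) = ∑ b, ∑ b', (normSq (G b b') : ℂ) := by
  simp only [sq, trace, diag, mul_apply, ← Complex.mul_conj]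
  refine Finset.sum_congr rfl fun b _ => Finset.sum_congr rfl fun b' _ => ?_
  rw [← hG.apply b' b]
  rfl

variable {w : Matrix F F ℂ} (hw : w ∈ unitaryGroup F ℂ)
include hw

theorem sum_normSq_eq_one_of_mem_unitaryGroup (i : F) : ∑ a, normSq (w i a) = 1 := by
  have h := congr_fun (congr_fun (mem_unitaryGroup_iff.1 hw) i) i
  rw [star_eq_conjTranspose, mul_conjTranspose_apply_self, one_apply_eq] at h
  exact_mod_cast h

theorem trace_sq_mul_conjTranspose_unitary_mul_mul_transpose (M : Matrix F F ℂ) :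
    trace ((w * M * wᵀ * (w * M * wᵀ)ᴴ) ^ 2) = trace ((M * Mᴴ) ^ 2) := by
  have hw' : wᴴ * w = 1 := mem_unitaryGroup_iff'.1 hw
  have hwt : wᵀ * wᵀᴴ = 1 := by
    rw [transpose_conjTranspose, ← conjTranspose_transpose, ← transpose_mul, hw', transpose_one]
  have hconj : w * M * wᵀ * (w * M * wᵀ)ᴴ = w * (M * Mᴴ) * wᴴ := by
    simp only [conjTranspose_mul, Matrix.mul_assoc]
    rw [← Matrix.mul_assoc wᵀ, hwt, Matrix.one_mul]
  rw [hconj, sq, sq]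
  simp only [Matrix.mul_assoc]
  rw [← Matrix.mul_assoc wᴴ w, hw', Matrix.one_mul, trace_mul_comm]
  simp only [Matrix.mul_assoc, hw', Matrix.mul_one]

end Matrix

namespace IsTrianglePresentation

variable (hT : IsTrianglePresentation q T)
include hT

theorem sum_succMatrix_row (i : F) : ∑ j, succMatrix T i j = q + 1 := by
  simp only [succMatrix, of_apply, sum_boole_eq_ncard, (hT.2.2.2 i).2]
  push_cast
  ring

theorem succMatrix_mul_transpose [DecidableEq F] :
    succMatrix T * (succMatrix T)ᵀ = (q : ℝ) • 1 + of fun _ _ => 1 :=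
  boole_mul_transpose_eq (fun a => (hT.2.2.2 a).2) fun a a' h => (hT.2.2.1 a a' h).2

theorem transpose_succMatrix_mul_transpose [DecidableEq F] :
    (succMatrix T)ᵀ * (succMatrix T)ᵀᵀ = (q : ℝ) • 1 + of fun _ _ => 1 :=
  boole_mul_transpose_eq (R := fun a b => ∃ k, (b, a, k) ∈ T) (fun a => (hT.2.2.2 a).1)
    fun a a' h => (hT.2.2.1 a a' h).1

theorem sum_ite_mem_third {M : Type*} [Semiring M] (y : M) (a b : F) :
    ∑ c, (if (a, b, c) ∈ T then y else 0) = y * if ∃ k, (a, b, k) ∈ T then 1 else 0 := by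
  rw [← sum_boole_eq_ite_exists fun _ _ => hT.eq_of_mem_of_mem_right, Finset.mul_sum]
  simp only [mul_boole]

theorem sum_ite_mem_mid {M : Type*} [Semiring M] (y : M) (a c : F) :
    ∑ b, (if (a, b, c) ∈ T then y else 0) = y * if ∃ k, (c, a, k) ∈ T then 1 else 0 := by
  have hrot : (∃ b, (a, b, c) ∈ T) ↔ ∃ k, (c, a, k) ∈ T :=
    ⟨fun ⟨b, h⟩ => ⟨b, hT.rotate h⟩, fun ⟨k, h⟩ => ⟨k, hT.rotate (hT.rotate h)⟩⟩
  simp only [← hrot]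
  rw [← sum_boole_eq_ite_exists fun _ _ => hT.eq_of_mem_of_mem_mid, Finset.mul_sum]
  simp only [mul_boole]

theorem map_contractFirst {M : Type*} [AddCommMonoid M] (f : ℂ → M) (hf : f 0 = 0)
    (x : F → ℂ) (b c : F) :
    f (contractFirst (triangleTensor T 1) x b c) = ∑ a, if (a, b, c) ∈ T then f (x a) else 0 := by
  classical
  by_cases h : ∃ a, (a, b, c) ∈ T
  · obtain ⟨a₀, ha₀⟩ := h
    have hiff : ∀ a, (a, b, c) ∈ T ↔ a = a₀ :=
      fun a => ⟨fun ha => hT.eq_of_mem_of_mem_left ha ha₀, fun ha => ha ▸ ha₀⟩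
    simp only [contractFirst, triangleTensor, of_apply, Pi.one_apply, mul_ite, mul_one, mul_zero]
    simp only [hiff, Finset.sum_ite_eq', Finset.mem_univ, if_true]
  · push Not at h
    simp [contractFirst, triangleTensor, h, hf]

theorem exists_mem_of_contractFirst_ne_zero {x : F → ℂ} {b c : F}
    (h : contractFirst (triangleTensor T 1) x b c ≠ 0) : ∃ k, (b, c, k) ∈ T := by
  rw [← id_eq (contractFirst _ x b c), hT.map_contractFirst id rfl] at h
  obtain ⟨a, -, ha⟩ := Finset.exists_ne_zero_of_sum_ne_zero h
  exact ⟨a, hT.rotate (hT.rotate (by_contra fun hn => ha (if_neg hn)))⟩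

theorem sum_normSq_contractFirst_row (x : F → ℂ) (b : F) :
    ∑ c, normSq (contractFirst (triangleTensor T 1) x b c) =
      ((fun a => normSq (x a)) ᵥ* succMatrix T) b := by
  simp only [hT.map_contractFirst normSq (map_zero _)]
  rw [Finset.sum_comm]
  exact Finset.sum_congr rfl fun a _ => hT.sum_ite_mem_third _ a b

theorem sum_normSq_contractFirst_col (x : F → ℂ) (c : F) :
    ∑ b, normSq (contractFirst (triangleTensor T 1) x b c) =
      ((fun a => normSq (x a)) ᵥ* (succMatrix T)ᵀ) c := by
  simp only [hT.map_contractFirst normSq (map_zero _)]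
  rw [Finset.sum_comm]
  exact Finset.sum_congr rfl fun a _ => hT.sum_ite_mem_mid _ a c

theorem sum_sum_normSq_contractFirst_sq (x : F → ℂ) :
    ∑ b, ∑ c, normSq (contractFirst (triangleTensor T 1) x b c) ^ 2 =
      (q + 1) * ∑ a, normSq (x a) ^ 2 := by
  simp only [hT.map_contractFirst (fun z => normSq z ^ 2) (by simp)]
  calc ∑ b, ∑ c, ∑ a, (if (a, b, c) ∈ T then normSq (x a) ^ 2 else 0)
      = ∑ a, ∑ b, ∑ c, (if (a, b, c) ∈ T then normSq (x a) ^ 2 else 0) :=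
        (Finset.sum_congr rfl fun _ _ => Finset.sum_comm).trans Finset.sum_comm
    _ = ∑ a, normSq (x a) ^ 2 * ∑ b, succMatrix T a b := by
        simp only [hT.sum_ite_mem_third, Finset.mul_sum, succMatrix, of_apply]
    _ = (q + 1) * ∑ a, normSq (x a) ^ 2 := by
        simp only [hT.sum_succMatrix_row, Finset.mul_sum, mul_comm]

theorem normSq_mul_conjTranspose_contractFirst_of_ne (x : F → ℂ) {b b' : F} (hbb : b ≠ b') :
    normSq ((contractFirst (triangleTensor T 1) x * (contractFirst (triangleTensor T 1) x)ᴴ) b b') =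
      ∑ c, normSq (contractFirst (triangleTensor T 1) x b c) *
        normSq (contractFirst (triangleTensor T 1) x b' c) := by
  set M := contractFirst (triangleTensor T 1) x
  -- only the common successor `s` of `b` and `b'` contributes, on either side
  obtain ⟨s, -, hs⟩ := (hT.2.2.1 b b' hbb).2
  have hzero : ∀ c, c ≠ s → M b c = 0 ∨ M b' c = 0 := by
    intro c hc
    by_contra! h
    exact hc (hs c ⟨hT.exists_mem_of_contractFirst_ne_zero h.1,
      hT.exists_mem_of_contractFirst_ne_zero h.2⟩)
  rw [mul_apply, Finset.sum_eq_single s, Finset.sum_eq_single s]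
  · simp [Complex.normSq_mul]
  all_goals first
    | intro c _ hc; rcases hzero c hc with h | h <;> simp [h]
    | simp

theorem trace_sq_mul_conjTranspose_contractFirst [DecidableEq F] (x : F → ℂ) :
    trace ((contractFirst (triangleTensor T 1) x * (contractFirst (triangleTensor T 1) x)ᴴ) ^ 2) =
      ((2 * (∑ a, normSq (x a)) ^ 2 + (q - 1) * ∑ a, normSq (x a) ^ 2 : ℝ) : ℂ) := by
  set M := contractFirst (triangleTensor T 1) x
  set t := fun a => normSq (x a)
  set X := fun b c => normSq (M b c)
  have hsplit : ∀ b b', normSq ((M * Mᴴ) b b') =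
      (∑ c, X b c * X b' c) + if b = b' then (∑ c, X b c) ^ 2 - ∑ c, X b c ^ 2 else 0 := by
    intro b b'
    rcases eq_or_ne b b' with rfl | hbb
    · rw [mul_conjTranspose_apply_self, ← Complex.ofReal_sum, Complex.normSq_ofReal, if_pos rfl]
      simp only [X, sq]
      ring
    · rw [hT.normSq_mul_conjTranspose_contractFirst_of_ne x hbb, if_neg hbb, add_zero]
  have hreal : ∑ b, ∑ b', normSq ((M * Mᴴ) b b') =
      2 * (∑ a, t a) ^ 2 + (q - 1) * ∑ a, t a ^ 2 :=
    calc ∑ b, ∑ b', normSq ((M * Mᴴ) b b')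
        = ∑ c, (∑ b, X b c) ^ 2 + ∑ b, ((∑ c, X b c) ^ 2 - ∑ c, X b c ^ 2) := by
          simp only [hsplit, Finset.sum_add_distrib, Finset.sum_ite_eq, Finset.mem_univ, if_true]
          congr 1
          simp only [sq, Finset.sum_mul_sum]
          exact (Finset.sum_congr rfl fun _ _ => Finset.sum_comm).trans Finset.sum_comm
      _ = ∑ c, (t ᵥ* (succMatrix T)ᵀ) c ^ 2 + ∑ b, (t ᵥ* succMatrix T) b ^ 2 -
            (q + 1) * ∑ a, t a ^ 2 := by
          rw [Finset.sum_sub_distrib, hT.sum_sum_normSq_contractFirst_sq]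
          simp only [X, M, t, hT.sum_normSq_contractFirst_row, hT.sum_normSq_contractFirst_col]
          ring
      _ = 2 * (∑ a, t a) ^ 2 + (q - 1) * ∑ a, t a ^ 2 := by
          rw [sum_vecMul_sq_of_mul_transpose_eq hT.transpose_succMatrix_mul_transpose,
            sum_vecMul_sq_of_mul_transpose_eq hT.succMatrix_mul_transpose]
          ring
  rw [(isHermitian_mul_conjTranspose_self M).trace_sq_eq_sum_normSq, ← hreal]
  push_cast
  rfl

theorem trace_sq_mul_conjTranspose_triangleTensor [DecidableEq F] {ω : F × F × F → ℂ}
    (hω : ∀ x ∈ T, ‖ω x‖ = 1) (i : F) :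
    trace (((of fun j k => triangleTensor T ω (i, j, k)) *
      (of fun j k => triangleTensor T ω (i, j, k))ᴴ) ^ 2) = (q + 1 : ℂ) := by
  set N : Matrix F F ℂ := of fun j k => triangleTensor T ω (i, j, k)
  have hnormSq : ∀ j k, normSq (N j k) = if (i, j, k) ∈ T then 1 else 0 := by
    intro j k
    simp only [N, of_apply, triangleTensor]
    split_ifs with h
    · rw [Complex.normSq_eq_norm_sq, hω _ h, one_pow]
    · exact map_zero _
  have hdiag : N * Nᴴ = diagonal fun j => ((succMatrix T i j : ℝ) : ℂ) := by
    ext j j'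
    rcases eq_or_ne j j' with rfl | hjj
    · rw [mul_conjTranspose_apply_self, diagonal_apply_eq, succMatrix, of_apply]
      simp only [hnormSq]
      exact_mod_cast (hT.sum_ite_mem_third (1 : ℝ) i j).trans (one_mul _)
    · rw [mul_apply, diagonal_apply_ne _ hjj]
      refine Finset.sum_eq_zero fun k _ => ?_
      by_cases h : (i, j, k) ∈ T
      · have h' : (i, j', k) ∉ T := fun h' => hjj (hT.eq_of_mem_of_mem_mid h h')
        simp [N, triangleTensor, h']
      · simp [N, triangleTensor, h]
  have hidem : ∀ j, ((succMatrix T i j : ℝ) : ℂ) ^ 2 = succMatrix T i j := by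
    intro j
    simp only [succMatrix, of_apply]
    split_ifs <;> simp
  rw [hdiag, diagonal_pow, trace_diagonal]
  simp only [Pi.pow_apply, hidem]
  exact_mod_cast hT.sum_succMatrix_row i

end IsTrianglePresentation

theorem sum_normSq_sq_eq_one_of_intertwines [DecidableEq F] {q : ℕ} (hq : q ≠ 1)
    {T₁ T₂ : Set (F × F × F)} [DecidablePred (· ∈ T₁)] [DecidablePred (· ∈ T₂)]
    (hT₁ : IsTrianglePresentation q T₁) (hT₂ : IsTrianglePresentation q T₂)
    {ω : F × F × F → ℂ} (hω : ∀ x ∈ T₂, ‖ω x‖ = 1) {w : Matrix F F ℂ}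
    (hw : w ∈ unitaryGroup F ℂ) {i : F}
    (hwE : w * contractFirst (triangleTensor T₁ 1) (w i) * wᵀ =
      of fun j k => triangleTensor T₂ ω (i, j, k)) :
    ∑ a, normSq (w i a) ^ 2 = 1 := by
  have key := hT₂.trace_sq_mul_conjTranspose_triangleTensor hω i
  rw [← hwE, trace_sq_mul_conjTranspose_unitary_mul_mul_transpose hw,
    hT₁.trace_sq_mul_conjTranspose_contractFirst, sum_normSq_eq_one_of_mem_unitaryGroup hw i] at key
  have hkey : ((q : ℝ) - 1) * (∑ a, normSq (w i a) ^ 2 - 1) = 0 := by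
    have hre : (2 * 1 ^ 2 + (q - 1) * ∑ a, normSq (w i a) ^ 2 : ℝ) = q + 1 := by
      exact_mod_cast key
    linear_combination hre
  have hq' : (q : ℝ) - 1 ≠ 0 := sub_ne_zero.2 (by exact_mod_cast hq)
  exact sub_eq_zero.1 ((mul_eq_zero.1 hkey).resolve_left hq')

theorem existsUnique_ne_zero_of_sum_eq_one_of_sum_sq_eq_one {ι : Type*} [Fintype ι]
    {t : ι → ℝ} (ht : ∀ a, 0 ≤ t a) (h1 : ∑ a, t a = 1) (h2 : ∑ a, t a ^ 2 = 1) :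
    ∃! a, t a ≠ 0 := by
  classical
  have h01 : ∀ a, t a = 0 ∨ t a = 1 := by
    have hle : ∀ a, t a ≤ 1 := fun a =>
      h1 ▸ Finset.single_le_sum (fun b _ => ht b) (Finset.mem_univ a)
    have hsum : ∑ a, t a * (1 - t a) = 0 := by
      simp only [mul_sub, mul_one, Finset.sum_sub_distrib, h1, ← sq, h2, sub_self]
    intro a
    have ha := (Finset.sum_eq_zero_iff_of_nonneg fun b _ =>
      mul_nonneg (ht b) (sub_nonneg.2 (hle b))).1 hsum a (Finset.mem_univ a)
    rcases mul_eq_zero.1 ha with h | h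
    · exact Or.inl h
    · exact Or.inr (by linarith)
  obtain ⟨a, -, ha⟩ := Finset.exists_ne_zero_of_sum_ne_zero (h1 ▸ one_ne_zero : ∑ a, t a ≠ 0)
  refine ⟨a, ha, fun b hb => by_contra fun hba => ?_⟩
  have hpair := Finset.sum_le_sum_of_subset_of_nonneg (Finset.subset_univ {a, b})
    fun x _ _ => ht x
  rw [Finset.sum_pair (Ne.symm hba), h1, (h01 a).resolve_left ha, (h01 b).resolve_left hb] at hpair
  norm_num at hpair

namespace Matrix

variable {w : Matrix F F ℂ} {σ : F → F} (hσ : ∀ i a, w i a ≠ 0 ↔ a = σ i)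
include hσ

theorem sum_mul_eq_of_support (f : F → ℂ) (i : F) : ∑ a, w i a * f a = w i (σ i) * f (σ i) :=
  Finset.sum_eq_single _ (fun a _ ha => by rw [not_ne_iff.1 (mt (hσ i a).1 ha), zero_mul])
    (by simp)

theorem injective_of_support_of_mem_unitaryGroup [DecidableEq F] (hw : w ∈ unitaryGroup F ℂ) :
    Function.Injective σ := by
  intro x y hxy
  by_contra hne
  have h := congr_fun (congr_fun (mem_unitaryGroup_iff.1 hw) x) y
  rw [mul_apply, sum_mul_eq_of_support hσ (fun a => star w a y), one_apply_ne hne,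
    star_apply] at h
  exact mul_ne_zero ((hσ x _).2 rfl) (star_ne_zero.2 ((hσ y _).2 hxy)) h

theorem mem_iff_of_support {T₁ T₂ : Set (F × F × F)} [DecidablePred (· ∈ T₁)]
    [DecidablePred (· ∈ T₂)] {ω : F × F × F → ℂ} (hω : ∀ x ∈ T₂, ω x ≠ 0)
    (hwE : ∀ i j k : F, ∑ a, ∑ b, ∑ c, w i a * w j b * w k c * triangleTensor T₁ 1 (a, b, c) =
      triangleTensor T₂ ω (i, j, k)) (i j k : F) :
    (i, j, k) ∈ T₂ ↔ (σ i, σ j, σ k) ∈ T₁ := by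
  have h := hwE i j k
  simp only [mul_assoc, ← Finset.mul_sum, sum_mul_eq_of_support hσ] at h
  rw [← triangleTensor_ne_zero_iff hω, ← h,
    ← triangleTensor_ne_zero_iff (ω := 1) fun _ _ => one_ne_zero]
  simp only [ne_eq, mul_eq_zero, (hσ _ _).2 rfl, false_or]

end Matrix

end

/-- If `w` is a unitary on `ℂ^F` with `(w ⊗ w ⊗ w) E_{T₁} = E_{T₂,ω}`, where `T₁, T₂` are
triangle presentations of the same order `q ≥ 2` and `ω : T₂ → S¹`, then `w` is a monomial
matrix, and consequently the triangle presentations `T₁` and `T₂` are isomorphic. -/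
theorem monomial_of_unitary_intertwines {F : Type*} [Fintype F] [DecidableEq F]
    (q : ℕ) (hq : 2 ≤ q) (T₁ T₂ : Set (F × F × F))
    [DecidablePred (· ∈ T₁)] [DecidablePred (· ∈ T₂)]
    (hT₁ : IsTrianglePresentation q T₁) (hT₂ : IsTrianglePresentation q T₂)
    (ω : F × F × F → ℂ) (hω : ∀ x ∈ T₂, ‖ω x‖ = 1)
    (w : Matrix F F ℂ) (hw : wᴴ * w = 1 ∧ w * wᴴ = 1)
    (hwE : ∀ i j k : F,
      (∑ a : F, ∑ b : F, ∑ c : F,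
          w i a * w j b * w k c * (if (a, b, c) ∈ T₁ then 1 else 0)) =
        (if (i, j, k) ∈ T₂ then ω (i, j, k) else 0)) :
    (∀ i : F, ∃! j : F, w i j ≠ 0) ∧ (∀ j : F, ∃! i : F, w i j ≠ 0) ∧
    ∃ θ : Equiv.Perm F,
      (fun x : F × F × F => (θ x.1, θ x.2.1, θ x.2.2)) '' T₁ = T₂ := by
  have hU : w ∈ unitaryGroup F ℂ := hw
  have hrow : ∀ i, ∃! j, w i j ≠ 0 := fun i => by
    simpa using existsUnique_ne_zero_of_sum_eq_one_of_sum_sq_eq_one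
      (fun a => Complex.normSq_nonneg (w i a)) (sum_normSq_eq_one_of_mem_unitaryGroup hU i)
      (sum_normSq_sq_eq_one_of_intertwines (by omega) hT₁ hT₂ hω hU
        (ext fun j k => (mul_contractFirst_mul_transpose_apply w _ i j k).trans (hwE i j k)))
  choose σ hσ using hrow
  have hsupp : ∀ i a, w i a ≠ 0 ↔ a = σ i := fun i a => ⟨(hσ i).2 a, fun h => h ▸ (hσ i).1⟩
  have hbij : σ.Bijective :=
    Finite.injective_iff_bijective.1 (injective_of_support_of_mem_unitaryGroup hsupp hU)
  have hmem := mem_iff_of_support hsupp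
    (fun x hx => norm_ne_zero_iff.1 (hω x hx ▸ one_ne_zero)) hwE
  refine ⟨fun i => ⟨σ i, hσ i⟩, fun j => by simpa only [hsupp, eq_comm] using hbij.existsUnique j,
    (Equiv.ofBijective σ hbij).symm, ?_⟩
  rw [Set.image_eq_preimage_of_inverse (g := fun x => (σ x.1, σ x.2.1, σ x.2.2))
    (fun x => by simp [Equiv.ofBijective_apply_symm_apply])
    (fun x => by simp [Equiv.ofBijective_symm_apply_apply])]
  ext ⟨i, j, k⟩
  exact (hmem i j k).symm
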